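/- arXiv:2506.02962 — 3 statements merged into one kernel-verified Lean document; each statement's English description precedes it below -/
import Mathlib

section
/- For a normed chain complex (C, ∂, ‖·‖₁) with topological dual normed cochain complex (C', δ, ‖·‖∞), and for every homology class α ∈ H_n(C), the seminorm satisfies ‖α‖₁ = max { ⟨β, α⟩ : β ∈ H^n_b(C'), ‖β‖∞ ≤ 1 }, where ⟨·,·⟩ denotes the Kronecker pairing between H_n(C) and the cohomology H^n_b(C') of the dual complex. -/
/-- Duality principle (Lemma 6.1): for a normed chain complex `C` with dual cochain
complex `C'`, the `ℓ¹`-seminorm of a homology class `[z]` is the maximum of the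
Kronecker pairings `⟨β, [z]⟩` over bounded cohomology classes `[β]` of seminorm at
most `1`.  We work in a fixed degree `n`, with `Cp`, `Cn`, `Cm` the chain groups in
degrees `n+1`, `n`, `n-1`. -/
theorem stmt0
    {Cp Cn Cm : Type*}
    [NormedAddCommGroup Cp] [NormedSpace ℝ Cp]
    [NormedAddCommGroup Cn] [NormedSpace ℝ Cn]
    [NormedAddCommGroup Cm] [NormedSpace ℝ Cm]
    (d1 : Cp →L[ℝ] Cn) (d0 : Cn →L[ℝ] Cm)
    (hdd : ∀ c, d0 (d1 c) = 0)
    (z : Cn) (hz : d0 z = 0) :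
    IsGreatest
      {r : ℝ | ∃ β : Cn →L[ℝ] ℝ, (∀ c, β (d1 c) = 0) ∧
        sInf {s : ℝ | ∃ g : Cm →L[ℝ] ℝ, s = ‖β + g.comp d0‖} ≤ 1 ∧ r = β z}
      (sInf {r : ℝ | ∃ b : Cp, r = ‖z + d1 b‖}) := by
  set S : Set ℝ := {r : ℝ | ∃ b : Cp, r = ‖z + d1 b‖} with hS
  have hSne : S.Nonempty := ⟨‖z + d1 0‖, 0, rfl⟩
  have hSbd : BddBelow S := ⟨0, by rintro r ⟨b, rfl⟩; positivity⟩
  set K : Submodule ℝ Cn := (LinearMap.range (d1 : Cp →ₗ[ℝ] Cn)).topologicalClosure with hK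
  haveI : IsClosed (K : Set Cn) := Submodule.isClosed_topologicalClosure _
  set π : Cn →L[ℝ] (Cn ⧸ K) :=
    K.mkQ.mkContinuous 1 (fun x => by simpa using Submodule.Quotient.norm_mk_le K x) with hπ
  have hπ_apply : ∀ x : Cn, π x = Submodule.Quotient.mk x := fun x => rfl
  have hπ_le : ∀ x : Cn, ‖π x‖ ≤ ‖x‖ := fun x => Submodule.Quotient.norm_mk_le K x
  -- the key norm computation
  have hnorm : ‖π z‖ = sInf S := by
    apply le_antisymm
    · apply le_csInf hSne
      rintro r ⟨b, rfl⟩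
      have : π z = π (z + d1 b) := by
        rw [hπ_apply, hπ_apply, Submodule.Quotient.mk_add]
        have : (Submodule.Quotient.mk (d1 b) : Cn ⧸ K) = 0 := by
          rw [Submodule.Quotient.mk_eq_zero]
          exact Submodule.le_topologicalClosure _ ⟨b, rfl⟩
        rw [this, add_zero]
      rw [this]
      exact hπ_le _
    · apply le_of_forall_pos_le_add
      intro ε hε
      obtain ⟨m, hm, hmlt⟩ := Submodule.Quotient.norm_mk_lt (π z) (half_pos hε)
      have hmem : m - z ∈ K :=
        (Submodule.Quotient.eq K).mp (hm.trans (hπ_apply z))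
      -- m - z ∈ closure of range d1
      have : m - z ∈ closure ((LinearMap.range (d1 : Cp →ₗ[ℝ] Cn)) : Set Cn) := by
        rw [hK] at hmem
        exact hmem
      obtain ⟨w, hw, hwd⟩ := Metric.mem_closure_iff.mp this (ε/2) (half_pos hε)
      obtain ⟨b, rfl⟩ := hw
      have key : ‖z + d1 b‖ < ‖π z‖ + ε := by
        have : z + d1 b = m - ((m - z) - d1 b) := by abel
        rw [this]
        calc ‖m - ((m - z) - d1 b)‖ ≤ ‖m‖ + ‖(m - z) - d1 b‖ := norm_sub_le _ _
          _ < (‖π z‖ + ε/2) + ε/2 := by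
              apply add_lt_add hmlt
              rw [dist_eq_norm] at hwd
              exact hwd
          _ = ‖π z‖ + ε := by ring
      exact le_of_lt (lt_of_le_of_lt (csInf_le hSbd ⟨b, rfl⟩) key)
  constructor
  · -- membership
    obtain ⟨g, hg1, hg2⟩ := exists_dual_vector'' ℝ (π z)
    refine ⟨g.comp π, ?_, ?_, ?_⟩
    · intro c
      have h0 : π (d1 c) = 0 := by
        rw [hπ_apply, Submodule.Quotient.mk_eq_zero]
        exact Submodule.le_topologicalClosure _ ⟨c, rfl⟩
      simp [ContinuousLinearMap.comp_apply, h0]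
    · have hβnorm : ‖g.comp π‖ ≤ 1 := by
        apply ContinuousLinearMap.opNorm_le_bound _ zero_le_one
        intro x
        calc ‖g (π x)‖ ≤ ‖g‖ * ‖π x‖ := g.le_opNorm _
          _ ≤ 1 * ‖x‖ := mul_le_mul hg1 (hπ_le x) (norm_nonneg _) zero_le_one
      have hmem : ‖g.comp π‖ ∈ {s : ℝ | ∃ h : Cm →L[ℝ] ℝ, s = ‖g.comp π + h.comp d0‖} :=
        ⟨0, by simp⟩
      have hbd : BddBelow {s : ℝ | ∃ h : Cm →L[ℝ] ℝ, s = ‖g.comp π + h.comp d0‖} :=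
        ⟨0, by rintro s ⟨h, rfl⟩; positivity⟩
      exact le_trans (csInf_le hbd hmem) hβnorm
    · rw [ContinuousLinearMap.comp_apply, hg2, hnorm]; norm_num
  · -- upper bound
    rintro r ⟨β, hβ1, hβ2, rfl⟩
    apply le_csInf hSne
    rintro r ⟨b, rfl⟩
    set A : Set ℝ := {s : ℝ | ∃ g : Cm →L[ℝ] ℝ, s = ‖β + g.comp d0‖} with hA
    have hAne : A.Nonempty := ⟨‖β + (0 : Cm →L[ℝ] ℝ).comp d0‖, 0, rfl⟩
    have hAbd : BddBelow A := ⟨0, by rintro s ⟨g, rfl⟩; positivity⟩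
    have hkey : ∀ s ∈ A, β z ≤ s * ‖z + d1 b‖ := by
      rintro s ⟨g, rfl⟩
      have : β z = (β + g.comp d0) (z + d1 b) := by
        simp [map_add, hβ1, hz, hdd]
      rw [this]
      exact le_trans (le_abs_self _) ((β + g.comp d0).le_opNorm _)
    have h1 : β z ≤ sInf A * ‖z + d1 b‖ := by
      rcases eq_or_lt_of_le (norm_nonneg (z + d1 b)) with hc | hc
      · have := hkey _ ⟨0, rfl⟩
        rw [← hc] at this ⊢
        simpa using this
      · rw [← div_le_iff₀ hc]
        apply le_csInf hAne
        intro s hs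
        rw [div_le_iff₀ hc]
        exact hkey s hs
    calc β z ≤ sInf A * ‖z + d1 b‖ := h1
      _ ≤ ‖z + d1 b‖ := mul_le_of_le_one_left (norm_nonneg _) hβ2
end

section
/- Let (X, μ) be a probability space and Γ a countable group acting on X by measure-preserving transformations. The integration map C_k(M̃) ⊗_{ZΓ} L^∞(X, Z) ⊗_{ZΓ} ℝ → C_k(M; ℝ) given on generators by s ⊗ [f] ⊗ a ↦ (a ∫_X f dμ)·p(s) is a well-defined chain map that does not increase the norm, where the domain carries the norm ⦀Σᵢ sᵢ⊗[fᵢ]⊗aᵢ⦀ = Σᵢ |aᵢ| ∫_X |fᵢ| dμ (for reduced representatives) and the codomain carries the ℓ¹-norm. -/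
open MeasureTheory

lemma myN_add {Q : Type*} (x y : Q →₀ ℝ) :
    ((x + y).sum fun _ v => |v|) ≤ (x.sum fun _ v => |v|) + (y.sum fun _ v => |v|) := by
  classical
  have hsub : (x + y).support ⊆ x.support ∪ y.support := Finsupp.support_add
  rw [Finsupp.sum_of_support_subset _ hsub _ (fun i _ => abs_zero),
      Finsupp.sum_of_support_subset x (Finset.subset_union_left) _ (fun i _ => abs_zero),
      Finsupp.sum_of_support_subset y (Finset.subset_union_right) _ (fun i _ => abs_zero),
      ← Finset.sum_add_distrib]
  exact Finset.sum_le_sum fun i _ => by simpa using abs_add_le (x i) (y i)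

lemma myIntegrable {X : Type*} [MeasurableSpace X] (μ : Measure X) [IsProbabilityMeasure μ]
    (f : X → ℤ) (hf : Measurable f) (hb : ∃ M, ∀ x, |f x| ≤ M) :
    Integrable (fun x => (f x : ℝ)) μ := by
  obtain ⟨M, hM⟩ := hb
  have hm : Measurable fun x => (f x : ℝ) := measurable_from_top.comp hf
  refine ⟨hm.aestronglyMeasurable, HasFiniteIntegral.of_bounded (C := (M : ℝ)) ?_⟩
  exact ae_of_all _ fun x => by
    rw [Real.norm_eq_abs, ← Int.cast_abs]; exact_mod_cast hM x

/-- The integration map `C_k(M̃) ⊗_{ℤΓ} L^∞(X,ℤ) ⊗_{ℤΓ} ℝ → C_k(M;ℝ)`,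
`s ⊗ [f] ⊗ a ↦ (a ∫_X f dμ)·p(s)`, is well defined (i.e. `ℤΓ`-balanced and
biadditive on generators), is a chain map, and does not increase the norm on
reduced representatives.  Here `S` (resp. `S'`) abstracts the set of singular
`k`- (resp. `(k-1)`-) simplices of `M̃` with its deck `Γ`-action, `p : S → Q`
(resp. `p' : S' → Q'`) the projection to simplices of `M`, `bd` the singular
boundary on simplices and `bdQ` the induced boundary on real chains of `M`. -/
theorem stmt6 {Γ X S S' Q Q' : Type*} [Group Γ]
    [MeasurableSpace X] (μ : Measure X) [IsProbabilityMeasure μ]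
    [MulAction Γ X]
    (hμ : ∀ γ : Γ, MeasurePreserving (fun x : X => γ • x) μ μ)
    [MulAction Γ S] [MulAction Γ S']
    (p : S → Q) (p' : S' → Q')
    (hp : ∀ (γ : Γ) (s : S), p (γ • s) = p s)
    (hp' : ∀ (γ : Γ) (t : S'), p' (γ • t) = p' t)
    (bd : S → S' →₀ ℤ)
    (hbd : ∀ (γ : Γ) (s : S), bd (γ • s) = (bd s).mapDomain (fun t => γ • t))
    (bdQ : (Q →₀ ℝ) →ₗ[ℝ] (Q' →₀ ℝ))
    (hbdQ : ∀ s : S, bdQ (Finsupp.single (p s) 1) =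
      (bd s).sum fun t n => (n : ℝ) • Finsupp.single (p' t) 1)
    (I : S → (X → ℤ) → ℝ → (Q →₀ ℝ))
    (hI : ∀ s f a, I s f a = (a * ∫ x, (f x : ℝ) ∂μ) • Finsupp.single (p s) 1) :
    -- `ℤΓ`-balancedness: well-definedness on the tensor product
    (∀ (γ : Γ) (s : S) (f : X → ℤ) (a : ℝ), Measurable f → (∃ M, ∀ x, |f x| ≤ M) →
        I (γ • s) (fun x => f (γ⁻¹ • x)) a = I s f a) ∧
    -- biadditivity on generators
    (∀ (s : S) (f g : X → ℤ) (a : ℝ), Measurable f → Measurable g →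
        (∃ M, ∀ x, |f x| ≤ M) → (∃ M, ∀ x, |g x| ≤ M) →
        I s (f + g) a = I s f a + I s g a) ∧
    (∀ (s : S) (f : X → ℤ) (a b : ℝ), I s f (a + b) = I s f a + I s f b) ∧
    -- chain map property on generators
    (∀ (s : S) (f : X → ℤ) (a : ℝ),
        bdQ (I s f a) =
          (bd s).sum fun t n =>
            ((n : ℝ) * (a * ∫ x, (f x : ℝ) ∂μ)) • Finsupp.single (p' t) 1) ∧
    -- norm non-increasing on reduced representatives
    (∀ (m : ℕ) (s : Fin m → S) (f : Fin m → X → ℤ) (a : Fin m → ℝ),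
        (∀ i, Measurable (f i)) → (∀ i, ∃ M, ∀ x, |f i x| ≤ M) →
        Function.Injective (fun i => p (s i)) →
        ((∑ i, I (s i) (f i) (a i)).sum fun _ v => |v|) ≤
          ∑ i, |a i| * ∫ x, |(f i x : ℝ)| ∂μ) := by
  refine ⟨?_, ?_, ?_, ?_, ?_⟩
  · intro γ s f a hf _hb
    rw [hI, hI, hp]
    congr 2
    have hm : Measurable fun x => (f x : ℝ) := measurable_from_top.comp hf
    calc ∫ x, (f (γ⁻¹ • x) : ℝ) ∂μ
        = ∫ y, (f y : ℝ) ∂(μ.map fun x => γ⁻¹ • x) :=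
          (integral_map (hμ γ⁻¹).measurable.aemeasurable hm.aestronglyMeasurable).symm
      _ = ∫ y, (f y : ℝ) ∂μ := by rw [(hμ γ⁻¹).map_eq]
  · intro s f g a hf hg hbf hbg
    rw [hI, hI, hI, ← add_smul, ← mul_add]
    congr 2
    have : ∫ x, ((f + g) x : ℝ) ∂μ = ∫ x, ((f x : ℝ) + (g x : ℝ)) ∂μ := by
      congr 1; ext x; push_cast [Pi.add_apply]; ring
    rw [this, integral_add (myIntegrable μ f hf hbf) (myIntegrable μ g hg hbg)]
  · intro s f a b
    rw [hI, hI, hI, ← add_smul, ← add_mul]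
  · intro s f a
    rw [hI, LinearMap.map_smul, hbdQ, Finsupp.smul_sum]
    refine Finsupp.sum_congr fun t _ => ?_
    rw [smul_smul, mul_comm]
  · intro m s f a hf hb _hinj
    calc ((∑ i, I (s i) (f i) (a i)).sum fun _ v => |v|)
        ≤ ∑ i, ((I (s i) (f i) (a i)).sum fun _ v => |v|) :=
          Finset.le_sum_of_subadditive (fun x : Q →₀ ℝ => x.sum fun _ v => |v|)
            (by simp) (fun x y => myN_add x y) _ _
      _ ≤ ∑ i, |a i| * ∫ x, |(f i x : ℝ)| ∂μ := by
          refine Finset.sum_le_sum fun i _ => ?_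
          rw [hI, Finsupp.smul_single, smul_eq_mul, mul_one]
          refine le_trans (le_of_eq (Finsupp.sum_single_index (abs_zero))) ?_
          rw [abs_mul]
          have habs : |∫ x, (f i x : ℝ) ∂μ| ≤ ∫ x, |(f i x : ℝ)| ∂μ := by
            simpa [Real.norm_eq_abs] using
              norm_integral_le_integral_norm (μ := μ) (fun x => (f i x : ℝ))
          exact mul_le_mul_of_nonneg_left habs (abs_nonneg _)
end

section
/- Let (V_•, ∂_•) be a chain complex of normed Γ-modules and suppose λ_• : C_• → V_• is a chain map of normed chain complexes which is surjective-up-to-ε in the following sense: for every v ∈ V_{n+1} and ε > 0 there exists c ∈ C_{n+1} with ‖v − λ_{n+1}(c)‖ < ε. If λ_n is isometric in degree n and the boundary operators satisfy ‖∂_{n+1}‖ ≤ n+2 on V, then the induced map H_n(λ) : H_n(C) → H_n(V) is isometric on classes in its image: for every cycle c ∈ C_n, every ρ ∈ V_n homologous to λ_n(c), and every ε > 0, there exists b ∈ C_{n+1} with ‖c + ∂_{n+1}b‖ < ‖ρ‖ + ε. -/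
/-- Abstract isometry criterion for the induced map in homology.  `Cn, Cn1` are the
chain groups of the source in degrees `n, n+1`, `Vn, Vn1` those of the target,
`lam, lam1` form a chain map which is isometric in degree `n` and whose image in
degree `n+1` is dense; the boundary of the target has norm at most `n+2`.  Then for
every cycle `c` and every `ρ` homologous to `lam c` and every `ε > 0` there is a
chain `b` with `‖c + ∂b‖ < ‖ρ‖ + ε`. -/
theorem stmt9 {Cn Cn1 Vn Vn1 : Type*} (n : ℕ)
    [NormedAddCommGroup Cn] [NormedSpace ℝ Cn]
    [NormedAddCommGroup Cn1] [NormedSpace ℝ Cn1]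
    [NormedAddCommGroup Vn] [NormedSpace ℝ Vn]
    [NormedAddCommGroup Vn1] [NormedSpace ℝ Vn1]
    (dC : Cn1 →ₗ[ℝ] Cn) (dV : Vn1 →ₗ[ℝ] Vn)
    (hdV : ∀ v, ‖dV v‖ ≤ (n + 2) * ‖v‖)
    (lam : Cn →ₗ[ℝ] Vn) (lam1 : Cn1 →ₗ[ℝ] Vn1)
    (hiso : ∀ c, ‖lam c‖ = ‖c‖)
    (hchain : ∀ c, lam (dC c) = dV (lam1 c))
    (happrox : ∀ (v : Vn1) (ε : ℝ), 0 < ε → ∃ c : Cn1, ‖v - lam1 c‖ < ε) :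
    ∀ (c : Cn) (ρ : Vn), (∃ β : Vn1, lam c + dV β = ρ) →
      ∀ ε : ℝ, 0 < ε → ∃ b : Cn1, ‖c + dC b‖ < ‖ρ‖ + ε := by
  rintro c ρ ⟨β, hβ⟩ ε hε
  have hn : (0:ℝ) < n + 2 := by positivity
  obtain ⟨b, hb⟩ := happrox β (ε / (n + 2)) (by positivity)
  refine ⟨b, ?_⟩
  have key : ‖c + dC b‖ = ‖ρ - dV (β - lam1 b)‖ := by
    rw [← hiso]
    congr 1
    rw [map_add, hchain, ← hβ, map_sub]
    abel
  calc ‖c + dC b‖ ≤ ‖ρ‖ + ‖dV (β - lam1 b)‖ := by rw [key]; exact norm_sub_le _ _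
    _ ≤ ‖ρ‖ + (n + 2) * ‖β - lam1 b‖ := by linarith [hdV (β - lam1 b)]
    _ < ‖ρ‖ + (n + 2) * (ε / (n + 2)) := by nlinarith [norm_nonneg (β - lam1 b)]
    _ = ‖ρ‖ + ε := by field_simp
end
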